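/- arXiv:2304.08567 — 3 statements merged into one kernel-verified Lean document; each statement's English description precedes it below -/
import Mathlib

section
/- Any two genlex orderings of the same set X ⊆ {0,1}^n have the same cost c(L). -/
def lamPos {n : ℕ} (x y : Fin n → Bool) : ℕ :=
  (Finset.univ.filter (fun i : Fin n => x i ≠ y i)).sup (fun i => (i : ℕ) + 1)

def hamming {n : ℕ} (x y : Fin n → Bool) : ℕ :=
  (Finset.univ.filter (fun i : Fin n => x i ≠ y i)).card

def sameSuffix {n : ℕ} (k : ℕ) (x y : Fin n → Bool) : Prop :=
  ∀ i : Fin n, n - k ≤ (i : ℕ) → x i = y i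

def IsOrdering {n : ℕ} (X : Finset (Fin n → Bool)) (L : List (Fin n → Bool)) : Prop :=
  L.Nodup ∧ ∀ x, x ∈ L ↔ x ∈ X

def IsGenlex {n : ℕ} (L : List (Fin n → Bool)) : Prop :=
  ∀ (k i j m : ℕ) (hij : i ≤ j) (hjm : j ≤ m) (hm : m < L.length),
    sameSuffix k (L.get ⟨i, by omega⟩) (L.get ⟨m, hm⟩) →
    sameSuffix k (L.get ⟨i, by omega⟩) (L.get ⟨j, by omega⟩)

def cost {n : ℕ} (L : List (Fin n → Bool)) : ℕ :=
  (L.zipWith lamPos L.tail).sum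

/-!
For `1 ≤ k ≤ n`, two strings have the same length-`k` suffix exactly when `λ(x, y) ≤ n - k`,
so `λ(x, y)` counts the `k` at which the suffixes of `x` and `y` differ. Summing over consecutive
pairs, `c(L)` is the sum over `k` of the number of places where the length-`k` suffix changes
along `L`. In a genlex ordering each suffix occupies one contiguous run, so that number is the
number of distinct length-`k` suffixes in `X`, minus one: it depends on `X` alone.
-/

open Finset

section Runs

variable {β : Type*}

def ContiguousRuns (l : List β) : Prop :=
  ∀ (i j m : ℕ) (hij : i ≤ j) (hjm : j ≤ m) (hm : m < l.length), l[i] = l[m] → l[i] = l[j]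

def changeCount [DecidableEq β] : List β → ℕ
  | a :: b :: t => (if a = b then 0 else 1) + changeCount (b :: t)
  | _ => 0

theorem ContiguousRuns.of_cons {a : β} {l : List β} (h : ContiguousRuns (a :: l)) :
    ContiguousRuns l := fun i j m hij hjm hm =>
  h (i + 1) (j + 1) (m + 1) (by omega) (by omega) (by simpa using hm)

theorem ContiguousRuns.notMem_of_ne {a b : β} {l : List β} (h : ContiguousRuns (a :: b :: l))
    (hab : a ≠ b) : a ∉ b :: l := by
  intro ha
  obtain ⟨m, hm, rfl⟩ := List.getElem_of_mem ha
  exact hab (h 0 1 (m + 1) (by omega) (by omega) (by simpa using hm) rfl)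

-- The subtraction is truncated, so the empty list is covered too.
theorem ContiguousRuns.changeCount_eq [DecidableEq β] :
    ∀ {l : List β}, ContiguousRuns l → changeCount l = l.toFinset.card - 1
  | [], _ | [_], _ => rfl
  | a :: b :: t, h => by
    have ih := h.of_cons.changeCount_eq
    have hpos : 0 < (b :: t).toFinset.card := by simp
    by_cases hab : a = b
    · subst hab
      simp_all [changeCount]
    · have ha : a ∉ (b :: t).toFinset := by simpa using h.notMem_of_ne hab
      rw [changeCount, if_neg hab, ih, List.toFinset_cons (a := a), card_insert_of_notMem ha]
      omega

end Runs

section Suffix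

variable {n : ℕ}

def keepSuffix (k : ℕ) (x : Fin n → Bool) : Fin n → Bool :=
  fun i => if n - k ≤ (i : ℕ) then x i else false

theorem keepSuffix_eq_iff {k : ℕ} {x y : Fin n → Bool} :
    keepSuffix k x = keepSuffix k y ↔ sameSuffix k x y := by
  simp only [funext_iff, keepSuffix, sameSuffix]
  exact forall_congr' fun i => by by_cases hi : n - k ≤ (i : ℕ) <;> simp [hi]

theorem sameSuffix_iff_lamPos_le {k : ℕ} {x y : Fin n → Bool} :
    sameSuffix k x y ↔ lamPos x y ≤ n - k := by
  simp only [sameSuffix, lamPos, Finset.sup_le_iff, mem_filter, mem_univ, true_and]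
  exact forall_congr' fun i => by grind

theorem lamPos_le (x y : Fin n → Bool) : lamPos x y ≤ n :=
  Finset.sup_le fun i _ => i.isLt

theorem lamPos_eq_card (x y : Fin n → Bool) :
    lamPos x y = #{k ∈ Icc 1 n | keepSuffix k x ≠ keepSuffix k y} := by
  have hfilter : {k ∈ Icc 1 n | keepSuffix k x ≠ keepSuffix k y} = Ioc (n - lamPos x y) n := by
    ext k
    simp only [mem_filter, mem_Icc, mem_Ioc, ne_eq, keepSuffix_eq_iff,
      sameSuffix_iff_lamPos_le]
    omega
  rw [hfilter, Nat.card_Ioc]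
  have := lamPos_le x y
  omega

theorem cost_eq_sum_changeCount (L : List (Fin n → Bool)) :
    cost L = ∑ k ∈ Icc 1 n, changeCount (L.map (keepSuffix k)) := by
  induction L with
  | nil => simp [cost, changeCount]
  | cons x t ih =>
    cases t with
    | nil => simp [cost, changeCount]
    | cons y t =>
      have hcost : cost (x :: y :: t) = lamPos x y + cost (y :: t) := rfl
      simp only [hcost, ih, lamPos_eq_card, card_filter, List.map_cons, changeCount,
        sum_add_distrib, ite_not]

theorem IsGenlex.contiguousRuns_map_keepSuffix {L : List (Fin n → Bool)} (h : IsGenlex L)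
    (k : ℕ) : ContiguousRuns (L.map (keepSuffix k)) := by
  intro i j m hij hjm hm
  simp only [List.getElem_map, keepSuffix_eq_iff]
  exact h k i j m hij hjm (by simpa using hm)

theorem IsGenlex.cost_eq {X : Finset (Fin n → Bool)} {L : List (Fin n → Bool)}
    (hL : ∀ x, x ∈ L ↔ x ∈ X) (h : IsGenlex L) :
    cost L = ∑ k ∈ Icc 1 n, (#(X.image (keepSuffix k)) - 1) := by
  rw [cost_eq_sum_changeCount]
  refine sum_congr rfl fun k _ => ?_
  have himage : (L.map (keepSuffix k)).toFinset = X.image (keepSuffix k) := by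
    ext; simp [hL]
  rw [(h.contiguousRuns_map_keepSuffix k).changeCount_eq, himage]

end Suffix

theorem genlex_cost_unique {n : ℕ} (X : Finset (Fin n → Bool))
    (L L' : List (Fin n → Bool))
    (hL : IsOrdering X L) (hgen : IsGenlex L)
    (hL' : IsOrdering X L') (hgen' : IsGenlex L') :
    cost L = cost L' := by
  rw [hgen.cost_eq hL.2, hgen'.cost_eq hL'.2]
end

section
/- For any nonempty X ⊆ {0,1}^n and any x̃ ∈ X, the skeleton of the 0/1-polytope conv(X) admits a genlex Hamilton path starting at x̃. In particular, the skeleton of every 0/1-polytope has a Hamilton path starting at any prescribed vertex. -/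
noncomputable def toVec {n : ℕ} (x : Fin n → Bool) : Fin n → ℝ := fun i => if x i then 1 else 0

def IsPolyEdge {n : ℕ} (X : Finset (Fin n → Bool)) (x y : Fin n → Bool) : Prop :=
  x ≠ y ∧ ∀ ν : ℝ, 0 < ν → ν < 1 →
    (ν • toVec x + (1 - ν) • toVec y) ∉
      convexHull ℝ (toVec '' (((X.erase x).erase y : Finset (Fin n → Bool)) : Set (Fin n → Bool)))


/-!
Induct on `n`, splitting `X` by the last coordinate into two slices. A genlex Hamilton path of the
slice containing `x̃`, started at `x̃`, is followed by one of the other slice, started at a vertex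
`z` nearest in Hamming distance to the endpoint `y` of the first path. Edges of a slice remain
edges of `conv X`, since a slice lies in a facet of the cube. The jump `yz` is an edge as well: a
convex combination of other vertices meeting the open segment `]y, z[` lives in the face of the
cube spanned by `y` and `z`, hence uses a vertex `x ≠ z` of that face lying on `z`'s side; the
coordinates where `x` differs from `y` are among those where `z` does, so `x` is nearer to `y`.
-/

theorem mem_convexHull_sep_eq_of_forall_le {𝕜 E : Type*} [Field 𝕜] [LinearOrder 𝕜]
    [IsStrictOrderedRing 𝕜] [AddCommGroup E] [Module 𝕜 E] {s : Set E} (f : E →ₗ[𝕜] 𝕜) {c : 𝕜}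
    (hs : ∀ x ∈ s, f x ≤ c) {p : E} (hp : p ∈ convexHull 𝕜 s) (hpc : c ≤ f p) :
    p ∈ convexHull 𝕜 {x ∈ s | f x = c} := by
  obtain ⟨ι, _, z, w, hzs, -, hw0, hw1, rfl⟩ := eq_pos_convex_span_of_mem_convexHull hp
  have hgap : ∑ i, w i * (c - f (z i)) = c - f (∑ i, w i • z i) := by
    simp only [mul_sub, Finset.sum_sub_distrib, ← Finset.sum_mul, hw1, one_mul, map_sum,
      map_smul, smul_eq_mul]
  have hterm_nonneg : ∀ i ∈ Finset.univ, 0 ≤ w i * (c - f (z i)) := fun i _ =>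
    mul_nonneg (hw0 i).le (sub_nonneg.2 (hs _ (hzs ⟨i, rfl⟩)))
  have hterm_zero := (Finset.sum_eq_zero_iff_of_nonneg hterm_nonneg).1
    (le_antisymm (by linarith) (Finset.sum_nonneg hterm_nonneg))
  refine mem_convexHull_of_exists_fintype w z (fun i => (hw0 i).le) hw1 (fun i => ?_) rfl
  have hzi := (mul_eq_zero.1 (hterm_zero i (Finset.mem_univ i))).resolve_left (hw0 i).ne'
  exact ⟨hzs ⟨i, rfl⟩, by linarith⟩

theorem toVec_apply {n : ℕ} (x : Fin n → Bool) (i : Fin n) :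
    toVec x i = if x i then 1 else 0 := rfl

theorem bool_sign_mul_le (a b : Bool) :
    (2 * (if b then 1 else 0) - 1) * (if a then 1 else 0) ≤ (if b then (1 : ℝ) else 0) := by
  cases a <;> cases b <;> norm_num

theorem bool_sign_mul_eq_iff (a b : Bool) :
    (2 * (if b then 1 else 0) - 1) * (if a then 1 else 0) = (if b then (1 : ℝ) else 0) ↔
      a = b := by
  cases a <;> cases b <;> norm_num

/-- The linear form `v ↦ ∑ i ∈ I, (2 wᵢ - 1) vᵢ` is maximised over the cube exactly at the
vertices agreeing with `w` on `I`. -/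
theorem mem_convexHull_toVec_agree {n : ℕ} {S : Set (Fin n → Bool)} {p : Fin n → ℝ}
    (hp : p ∈ convexHull ℝ (toVec '' S)) (w : Fin n → Bool) (I : Finset (Fin n))
    (hpI : ∀ i ∈ I, p i = toVec w i) :
    p ∈ convexHull ℝ (toVec '' {x ∈ S | ∀ i ∈ I, x i = w i}) := by
  let f : (Fin n → ℝ) →ₗ[ℝ] ℝ := ∑ i ∈ I, (2 * toVec w i - 1) • LinearMap.proj i
  have hf : ∀ v, f v = ∑ i ∈ I, (2 * toVec w i - 1) * v i := fun v => by simp [f]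
  have hle : ∀ x : Fin n → Bool, ∀ i ∈ I, (2 * toVec w i - 1) * toVec x i ≤ toVec w i :=
    fun x i _ => bool_sign_mul_le (x i) (w i)
  have hface := mem_convexHull_sep_eq_of_forall_le f (c := ∑ i ∈ I, toVec w i)
    (by rintro _ ⟨x, -, rfl⟩; rw [hf]; exact Finset.sum_le_sum (hle x)) hp
    (by rw [hf]; exact (Finset.sum_congr rfl fun i hi => by
      rw [hpI i hi]; exact (bool_sign_mul_eq_iff (w i) (w i)).2 rfl).ge)
  refine convexHull_mono ?_ hface
  rintro _ ⟨⟨x, hxS, rfl⟩, hfx⟩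
  rw [hf, Finset.sum_eq_sum_iff_of_le (hle x)] at hfx
  exact ⟨x, ⟨hxS, fun i hi => (bool_sign_mul_eq_iff (x i) (w i)).1 (hfx i hi)⟩, rfl⟩

def slice {n : ℕ} (X : Finset (Fin (n + 1) → Bool)) (b : Bool) : Finset (Fin n → Bool) :=
  (X.filter (· (Fin.last n) = b)).image Fin.init

theorem mem_slice {n : ℕ} {X : Finset (Fin (n + 1) → Bool)} {b : Bool} {u : Fin n → Bool} :
    u ∈ slice X b ↔ Fin.snoc u b ∈ X := by
  simp only [slice, Finset.mem_image, Finset.mem_filter]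
  constructor
  · rintro ⟨x, ⟨hx, rfl⟩, rfl⟩
    rwa [Fin.snoc_init_self]
  · exact fun h => ⟨_, ⟨h, Fin.snoc_last _ _⟩, Fin.init_snoc _ _⟩

theorem toVec_init {n : ℕ} (x : Fin (n + 1) → Bool) :
    LinearMap.funLeft ℝ ℝ Fin.castSucc (toVec x) = toVec (Fin.init x) := rfl

theorem IsPolyEdge.snoc {n : ℕ} {X : Finset (Fin (n + 1) → Bool)} {b : Bool}
    {u v : Fin n → Bool} (h : IsPolyEdge (slice X b) u v) :
    IsPolyEdge X (Fin.snoc u b) (Fin.snoc v b) := by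
  refine ⟨fun e => h.1 (Fin.snoc_inj.1 e).1, fun ν hν0 hν1 hp => h.2 ν hν0 hν1 ?_⟩
  have hlast := mem_convexHull_toVec_agree hp (Fin.snoc u b) {Fin.last n}
    (by simp only [Finset.mem_singleton, forall_eq, Pi.add_apply, Pi.smul_apply, smul_eq_mul,
      toVec_apply, Fin.snoc_last]; split_ifs <;> ring)
  have hproj := Set.mem_image_of_mem (LinearMap.funLeft ℝ ℝ Fin.castSucc) hlast
  simp only [LinearMap.image_convexHull, map_add, map_smul, toVec_init, Fin.init_snoc] at hproj
  refine convexHull_mono ?_ hproj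
  rintro _ ⟨_, ⟨x, ⟨hxS, hxb⟩, rfl⟩, rfl⟩
  simp only [Finset.mem_singleton, forall_eq, Fin.snoc_last] at hxb
  rw [← Fin.snoc_init_self x, hxb] at hxS
  simp only [Finset.coe_erase, Set.mem_sdiff, Set.mem_singleton_iff, Finset.mem_coe,
    Fin.snoc_inj, and_true] at hxS
  refine ⟨Fin.init x, ?_, (toVec_init x).symm⟩
  simp only [Finset.coe_erase, Set.mem_sdiff, Set.mem_singleton_iff, Finset.mem_coe, mem_slice]
  exact ⟨⟨hxS.1.1, hxS.1.2⟩, hxS.2⟩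

theorem eq_of_hamming_le_of_agree {n : ℕ} {y z g : Fin n → Bool}
    (hagree : ∀ i, y i = z i → g i = y i) (hle : hamming y z ≤ hamming y g) : g = z := by
  have hsub : (Finset.univ.filter fun i => y i ≠ g i) ⊆ Finset.univ.filter fun i => y i ≠ z i := by
    intro i
    simp only [Finset.mem_filter, Finset.mem_univ, true_and]
    exact fun hyg hyz => hyg (hagree i hyz).symm
  have hdiff := Finset.eq_of_subset_of_card_le hsub hle
  funext i
  by_cases hyz : y i = z i
  · rw [hagree i hyz, hyz]
  · have hi : i ∈ Finset.univ.filter fun i => y i ≠ g i := hdiff ▸ (by simpa using hyz)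
    have hyg : y i ≠ g i := by simpa using hi
    rw [Bool.eq_not_iff.2 (Ne.symm hyg), Bool.eq_not_iff.2 (Ne.symm hyz)]

theorem isPolyEdge_of_hamming_le {n : ℕ} {X : Finset (Fin n → Bool)} {y z : Fin n → Bool}
    {k : Fin n} (hk : y k ≠ z k) (hmin : ∀ x ∈ X, x k = z k → hamming y z ≤ hamming y x) :
    IsPolyEdge X y z := by
  refine ⟨fun h => hk (h ▸ rfl), fun ν hν0 hν1 hp => ?_⟩
  set I := Finset.univ.filter fun i => y i = z i
  set T : Set (Fin n → Bool) := {x ∈ ((X.erase y).erase z : Set _) | ∀ i ∈ I, x i = y i}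
  have hface : ν • toVec y + (1 - ν) • toVec z ∈ convexHull ℝ (toVec '' T) :=
    mem_convexHull_toVec_agree hp y I fun i hi => by
      simp only [I, Finset.mem_filter, Finset.mem_univ, true_and] at hi
      simp only [Pi.add_apply, Pi.smul_apply, smul_eq_mul, toVec_apply, hi]; ring
  obtain ⟨g, ⟨hgS, hgy⟩, hgk⟩ : ∃ g ∈ T, g k = z k := by
    by_contra! hside
    have hsub : convexHull ℝ (toVec '' T) ⊆ {v | v k = toVec y k} := by
      refine convexHull_min ?_ (convex_hyperplane (LinearMap.proj k).isLinear _)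
      rintro _ ⟨g, hg, rfl⟩
      simp only [Set.mem_ofPred_eq, toVec_apply, Bool.not_not,
        Bool.eq_not_iff.2 (hside g hg), Bool.eq_not_iff.2 hk.symm]
    have hpk : ν * toVec y k + (1 - ν) * toVec z k = toVec y k := hsub hface
    have hzy : toVec z k = toVec y k :=
      mul_left_cancel₀ (sub_ne_zero.2 hν1.ne') (by linarith)
    exact hk (by revert hzy; rw [toVec_apply, toVec_apply]; cases y k <;> cases z k <;> norm_num)
  simp only [Finset.coe_erase, Set.mem_sdiff, Set.mem_singleton_iff, Finset.mem_coe] at hgS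
  exact hgS.2 (eq_of_hamming_le_of_agree (fun i hi => hgy i (by simpa [I] using hi))
    (hmin g hgS.1.1 hgk))

theorem sameSuffix_zero {n : ℕ} (x y : Fin n → Bool) : sameSuffix 0 x y :=
  fun i hi => absurd hi (by omega)

theorem sameSuffix.mono {n k l : ℕ} {x y : Fin n → Bool} (h : sameSuffix l x y) (hkl : k ≤ l) :
    sameSuffix k x y :=
  fun i hi => h i (by omega)

theorem sameSuffix_snoc_succ {n k : ℕ} {x y : Fin n → Bool} {b c : Bool} :
    sameSuffix (k + 1) (Fin.snoc x b : Fin (n + 1) → Bool) (Fin.snoc y c) ↔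
      b = c ∧ sameSuffix k x y := by
  constructor
  · intro h
    refine ⟨by simpa using h (Fin.last n) (by simp), fun i hi => ?_⟩
    simpa using h i.castSucc (by simp; omega)
  · rintro ⟨rfl, h⟩ i
    refine Fin.lastCases (fun _ => by simp) (fun j hj => ?_) i
    simpa using h j (by simpa using hj)

theorem isGenlex_iff {n : ℕ} {L : List (Fin n → Bool)} :
    IsGenlex L ↔ ∀ (k i j m : ℕ) (_ : i ≤ j) (_ : j ≤ m) (hm : m < L.length),
      sameSuffix k L[i] L[m] → sameSuffix k L[i] L[j] :=
  Iff.rfl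

theorem IsGenlex.map_snoc {n : ℕ} {L : List (Fin n → Bool)} (h : IsGenlex L) (b : Bool) :
    IsGenlex (L.map fun u => (Fin.snoc u b : Fin (n + 1) → Bool)) := by
  rw [isGenlex_iff] at h ⊢
  intro k i j m hij hjm hm hsuf
  simp only [List.getElem_map] at hsuf ⊢
  cases k with
  | zero => exact sameSuffix_zero _ _
  | succ k =>
    rw [sameSuffix_snoc_succ] at hsuf ⊢
    exact ⟨rfl, h k i j m hij hjm (by simpa using hm) hsuf.2⟩

theorem IsGenlex.append {n : ℕ} {L₁ L₂ : List (Fin n → Bool)} (h₁ : IsGenlex L₁)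
    (h₂ : IsGenlex L₂) (h : ∀ x ∈ L₁, ∀ y ∈ L₂, ¬ sameSuffix 1 x y) : IsGenlex (L₁ ++ L₂) := by
  rw [isGenlex_iff] at h₁ h₂ ⊢
  intro k i j m hij hjm hm hsuf
  rcases Nat.eq_zero_or_pos k with rfl | hk
  · exact sameSuffix_zero _ _
  by_cases hm₁ : m < L₁.length
  · simp only [List.getElem_append_left (hij.trans hjm |>.trans_lt hm₁),
      List.getElem_append_left (hjm.trans_lt hm₁), List.getElem_append_left hm₁] at hsuf ⊢
    exact h₁ k i j m hij hjm hm₁ hsuf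
  by_cases hi₁ : i < L₁.length
  · rw [List.getElem_append_left hi₁, List.getElem_append_right (not_lt.1 hm₁)] at hsuf
    exact absurd (hsuf.mono hk) (h _ (List.getElem_mem _) _ (List.getElem_mem _))
  · rw [not_lt] at hi₁
    simp only [List.getElem_append_right hi₁, List.getElem_append_right (hi₁.trans hij),
      List.getElem_append_right (not_lt.1 hm₁)] at hsuf ⊢
    exact h₂ k _ _ (m - L₁.length) (by omega) (by omega) (by simp at hm; omega) hsuf

theorem IsOrdering.map {n m : ℕ} {X : Finset (Fin n → Bool)} {L : List (Fin n → Bool)}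
    (h : IsOrdering X L) {f : (Fin n → Bool) → Fin m → Bool} (hf : Function.Injective f) :
    IsOrdering (X.image f) (L.map f) :=
  ⟨h.1.map hf, fun x => by simp [h.2]⟩

theorem IsOrdering.append {n : ℕ} {X Y : Finset (Fin n → Bool)} {L₁ L₂ : List (Fin n → Bool)}
    (h₁ : IsOrdering X L₁) (h₂ : IsOrdering Y L₂) (hXY : Disjoint X Y) :
    IsOrdering (X ∪ Y) (L₁ ++ L₂) :=
  ⟨h₁.1.append h₂.1 fun x hx₁ hx₂ =>
      Finset.disjoint_left.1 hXY ((h₁.2 x).1 hx₁) ((h₂.2 x).1 hx₂),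
    fun x => by simp [h₁.2, h₂.2]⟩

theorem image_snoc_slice {n : ℕ} (X : Finset (Fin (n + 1) → Bool)) (b : Bool) :
    (slice X b).image (fun u => (Fin.snoc u b : Fin (n + 1) → Bool)) =
      X.filter (· (Fin.last n) = b) := by
  ext x
  simp only [Finset.mem_image, Finset.mem_filter, mem_slice]
  constructor
  · rintro ⟨u, hu, rfl⟩
    exact ⟨hu, Fin.snoc_last _ _⟩
  · rintro ⟨hx, rfl⟩
    exact ⟨Fin.init x, by rwa [Fin.snoc_init_self], Fin.snoc_init_self x⟩

theorem IsOrdering.append_slices {n : ℕ} {X : Finset (Fin (n + 1) → Bool)} {b : Bool}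
    {L₁ L₂ : List (Fin n → Bool)} (h₁ : IsOrdering (slice X b) L₁)
    (h₂ : IsOrdering (slice X !b) L₂) :
    IsOrdering X (L₁.map (fun u => Fin.snoc u b) ++ L₂.map (fun u => Fin.snoc u !b)) := by
  have h := (h₁.map (Fin.snoc_left_injective (α := fun _ => Bool) b)).append
    (h₂.map (Fin.snoc_left_injective (α := fun _ => Bool) !b))
    (by
      rw [image_snoc_slice, image_snoc_slice]
      exact Finset.disjoint_filter.2 fun x _ hb hnb => by simp_all)
  rwa [image_snoc_slice, image_snoc_slice, Finset.filter_union_filter_of_codisjoint] at h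
  exact codisjoint_iff.2 (funext fun x => by cases x (Fin.last n) <;> cases b <;> simp)

def IsGenlexHamPath {n : ℕ} (X : Finset (Fin n → Bool)) (L : List (Fin n → Bool)) : Prop :=
  IsOrdering X L ∧ IsGenlex L ∧ L.IsChain (IsPolyEdge X)

theorem isGenlexHamPath_nil {n : ℕ} : IsGenlexHamPath (∅ : Finset (Fin n → Bool)) [] :=
  ⟨⟨List.nodup_nil, by simp⟩, fun _ _ _ _ _ _ hm => absurd hm (Nat.not_lt_zero _),
    List.isChain_nil⟩

theorem isGenlexHamPath_singleton {n : ℕ} (x : Fin n → Bool) : IsGenlexHamPath {x} [x] :=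
  ⟨⟨List.nodup_singleton x, by simp⟩, fun _ i j m hij hjm hm h => by
    obtain rfl : m = 0 := by simpa using hm
    obtain rfl : j = 0 := by omega
    obtain rfl : i = 0 := by omega
    exact h, List.isChain_singleton x⟩

theorem IsGenlexHamPath.append_slices {n : ℕ} {X : Finset (Fin (n + 1) → Bool)} {b : Bool}
    {L₁ L₂ : List (Fin n → Bool)} (h₁ : IsGenlexHamPath (slice X b) L₁)
    (h₂ : IsGenlexHamPath (slice X !b) L₂)
    (hjoin : ∀ u ∈ L₁.getLast?, ∀ v ∈ L₂.head?, IsPolyEdge X (Fin.snoc u b) (Fin.snoc v !b)) :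
    IsGenlexHamPath X (L₁.map (fun u => Fin.snoc u b) ++ L₂.map (fun u => Fin.snoc u !b)) := by
  refine ⟨h₁.1.append_slices h₂.1, (h₁.2.1.map_snoc b).append (h₂.2.1.map_snoc !b) ?_, ?_⟩
  · simp only [List.mem_map]
    rintro _ ⟨u, -, rfl⟩ _ ⟨v, -, rfl⟩ h
    simpa using (sameSuffix_snoc_succ.1 h).1
  · refine List.isChain_append.2 ⟨?_, ?_, ?_⟩
    · exact (List.isChain_map _).2 (h₁.2.2.imp fun _ _ => IsPolyEdge.snoc)
    · exact (List.isChain_map _).2 (h₂.2.2.imp fun _ _ => IsPolyEdge.snoc)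
    · simpa only [List.getLast?_map, List.head?_map, Option.mem_map, forall_exists_index,
        and_imp, forall_apply_eq_imp_iff₂] using hjoin

theorem exists_genlexHamPath_slice_from_nearest {n : ℕ}
    (ih : ∀ Y : Finset (Fin n → Bool), ∀ y₀ ∈ Y, ∃ L, IsGenlexHamPath Y L ∧ L.head? = some y₀)
    (X : Finset (Fin (n + 1) → Bool)) (y : Fin (n + 1) → Bool) :
    ∃ L, IsGenlexHamPath (slice X !(y (Fin.last n))) L ∧
      ∀ v ∈ L.head?, IsPolyEdge X y (Fin.snoc v !(y (Fin.last n))) := by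
  set c := !(y (Fin.last n)) with hc
  rcases (X.filter (· (Fin.last n) = c)).eq_empty_or_nonempty with hempty | hne
  · have hslice : slice X c = ∅ := by simp [slice, hempty]
    exact ⟨[], hslice ▸ isGenlexHamPath_nil, by simp⟩
  obtain ⟨z, hz, hmin⟩ := Finset.exists_min_image _ (hamming y) hne
  rw [Finset.mem_filter] at hz
  have hzc : Fin.snoc (Fin.init z) c = z := hz.2 ▸ Fin.snoc_init_self z
  obtain ⟨L, hL, hhead⟩ := ih (slice X c) (Fin.init z) (mem_slice.2 (hzc.symm ▸ hz.1))
  refine ⟨L, hL, ?_⟩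
  rw [hhead]
  rintro v ⟨⟩
  rw [hzc]
  exact isPolyEdge_of_hamming_le (k := Fin.last n) (by simp [hz.2, hc])
    fun x hx hxk => hmin x (Finset.mem_filter.2 ⟨hx, hxk.trans hz.2⟩)

theorem exists_genlexHamPath_head_eq {n : ℕ} (X : Finset (Fin n → Bool)) (x₀ : Fin n → Bool)
    (hx₀ : x₀ ∈ X) : ∃ L, IsGenlexHamPath X L ∧ L.head? = some x₀ := by
  induction n with
  | zero =>
    obtain rfl : X = {x₀} :=
      Finset.eq_singleton_iff_unique_mem.2 ⟨hx₀, fun _ _ => Subsingleton.elim _ _⟩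
    exact ⟨[x₀], isGenlexHamPath_singleton x₀, rfl⟩
  | succ n ih =>
    set b := x₀ (Fin.last n)
    have hx₀b : Fin.snoc (Fin.init x₀) b = x₀ := Fin.snoc_init_self x₀
    obtain ⟨L₁, h₁, hhead₁⟩ := ih (slice X b) (Fin.init x₀) (mem_slice.2 (by rwa [hx₀b]))
    obtain ⟨y, hy⟩ : ∃ y, L₁.getLast? = some y := by
      cases L₁ with
      | nil => simp at hhead₁
      | cons a l => exact ⟨_, List.getLast?_eq_some_getLast (List.cons_ne_nil a l)⟩
    obtain ⟨L₂, h₂, hjoin⟩ := exists_genlexHamPath_slice_from_nearest ih X (Fin.snoc y b)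
    rw [Fin.snoc_last] at h₂ hjoin
    refine ⟨_, h₁.append_slices h₂ ?_, ?_⟩
    · rw [hy]
      rintro u ⟨⟩
      exact hjoin
    · simp [List.head?_append, hhead₁, hx₀b]

theorem skeleton_genlex_hamPath_general {n : ℕ} (X : Finset (Fin n → Bool))
    (x0 : Fin n → Bool) (hx0 : x0 ∈ X) :
    ∃ L : List (Fin n → Bool),
      IsOrdering X L ∧ IsGenlex L ∧ L.Chain' (IsPolyEdge X) ∧ L.head? = some x0 := by
  obtain ⟨L, ⟨hord, hgenlex, hchain⟩, hhead⟩ := exists_genlexHamPath_head_eq X x0 hx0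
  exact ⟨L, hord, hgenlex, hchain, hhead⟩

theorem skeleton_genlex_hamPath {n : ℕ} (X : Finset (Fin n → Bool))
    (hX : X.Nonempty) (x0 : Fin n → Bool) (hx0 : x0 ∈ X) :
    ∃ L : List (Fin n → Bool),
      IsOrdering X L ∧ IsGenlex L ∧ L.Chain' (IsPolyEdge X) ∧ L.head? = some x0 :=
  skeleton_genlex_hamPath_general X x0 hx0
end

section
/- Let X ⊆ {0,1}^n, x ∈ X, β ∈ [n], and suppose N := argmin{ d(x,y) : y ∈ X \ {x}, λ(x,y) = β } is nonempty. Define w ∈ {−1,+1}^n by w_i = +1 if x_i = 0 and w_i = −1 if x_i = 1, and define P_b := {β : x_β = 1−b} ∪ {i > β : x_i = b} for b ∈ {0,1}. Then N = argmin{ w·y : y ∈ X, y_i = 0 for all i ∈ P_0, y_i = 1 for all i ∈ P_1 }. -/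
def dotB {n : ℕ} (w : Fin n → ℤ) (y : Fin n → Bool) : ℤ :=
  ∑ i, w i * (if y i then 1 else 0)

/-!
The two feasible sets coincide: `lamPos x y = β` says exactly that `y` differs from `x` at the
`β`-th coordinate (index `β - 1`) and agrees with it at every later one, which is what the
constraints `P0`, `P1` prescribe. On all of the cube the objective `w · y` is the Hamming
distance to `x` minus a constant, since `w i * y i = [x i ≠ y i] - [x i]` coordinatewise.
-/

section LamPos

variable {n : ℕ} {x y : Fin n → Bool}

theorem succ_le_lamPos {i : Fin n} (h : x i ≠ y i) : (i : ℕ) + 1 ≤ lamPos x y :=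
  Finset.le_sup (f := fun i : Fin n => (i : ℕ) + 1) (by simpa using h)

theorem lamPos_le_iff {k : ℕ} : lamPos x y ≤ k ↔ ∀ i : Fin n, k ≤ i → x i = y i := by
  simp only [lamPos, Finset.sup_le_iff, Finset.mem_filter, Finset.mem_univ, true_and]
  refine forall_congr' fun i => ⟨fun h hk => ?_, fun h hxy => ?_⟩
  · by_contra hxy
    have := h hxy
    omega
  · by_contra hk
    exact hxy (h (by omega))

theorem lamPos_self : lamPos x x = 0 :=
  Nat.le_zero.1 (lamPos_le_iff.2 fun _ _ => rfl)

theorem lamPos_eq_iff {β : ℕ} (hβ : β ≤ n) :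
    lamPos x y = β ↔ (∀ i : Fin n, (i : ℕ) + 1 = β → x i ≠ y i) ∧
      ∀ i : Fin n, β < (i : ℕ) + 1 → x i = y i := by
  constructor
  · rintro rfl
    refine ⟨fun i hi hxy => ?_, fun i hi => lamPos_le_iff.1 le_rfl i (by omega)⟩
    have : lamPos x y ≤ i := lamPos_le_iff.2 fun j hj => by
      rcases hj.eq_or_lt with hij | hij
      · rwa [← Fin.ext hij]
      · exact lamPos_le_iff.1 le_rfl j (by omega)
    omega
  · rintro ⟨hpivot, htail⟩
    refine le_antisymm (lamPos_le_iff.2 fun i hi => htail i (by omega)) ?_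
    rcases Nat.eq_zero_or_pos β with rfl | hpos
    · exact Nat.zero_le _
    · simpa [Nat.sub_add_cancel hpos] using
        succ_le_lamPos (hpivot ⟨β - 1, by omega⟩ (by simp; omega))

end LamPos

theorem pinned_iff {ι : Type*} {p q : ι → Prop} {x y : ι → Bool} {P0 P1 : Set ι}
    (hP0 : ∀ i, i ∈ P0 ↔ (p i ∧ x i = true) ∨ (q i ∧ x i = false))
    (hP1 : ∀ i, i ∈ P1 ↔ (p i ∧ x i = false) ∨ (q i ∧ x i = true)) :
    ((∀ i ∈ P0, y i = false) ∧ ∀ i ∈ P1, y i = true) ↔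
      (∀ i, p i → x i ≠ y i) ∧ ∀ i, q i → x i = y i := by
  simp only [hP0, hP1, ← forall_and]
  refine forall_congr' fun i => ?_
  cases x i <;> cases y i <;> simp

theorem dotB_eq_hamming_sub {n : ℕ} {x : Fin n → Bool} {w : Fin n → ℤ}
    (hw : ∀ i, w i = if x i then -1 else 1) (y : Fin n → Bool) :
    dotB w y = hamming x y - (Finset.univ.filter fun i => x i = true).card := by
  simp only [dotB, hamming, Finset.card_filter, Nat.cast_sum, ← Finset.sum_sub_distrib]
  refine Finset.sum_congr rfl fun i _ => ?_
  rw [hw]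
  cases x i <;> cases y i <;> simp

theorem dotB_le_dotB_iff {n : ℕ} {x : Fin n → Bool} {w : Fin n → ℤ}
    (hw : ∀ i, w i = if x i then -1 else 1) (y z : Fin n → Bool) :
    dotB w y ≤ dotB w z ↔ hamming x y ≤ hamming x z := by
  rw [dotB_eq_hamming_sub hw, dotB_eq_hamming_sub hw, sub_le_sub_iff_right, Nat.cast_le]

theorem closest_vertices_as_LOP_general {n : ℕ} (X : Finset (Fin n → Bool))
    (x : Fin n → Bool)
    (β : ℕ) (hβ1 : 1 ≤ β) (hβn : β ≤ n)
    (w : Fin n → ℤ) (hw : ∀ i, w i = if x i then -1 else 1)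
    (P0 P1 : Set (Fin n))
    (hP0 : ∀ i : Fin n, i ∈ P0 ↔
      (((i : ℕ) + 1 = β ∧ x i = true) ∨ ((i : ℕ) + 1 > β ∧ x i = false)))
    (hP1 : ∀ i : Fin n, i ∈ P1 ↔
      (((i : ℕ) + 1 = β ∧ x i = false) ∨ ((i : ℕ) + 1 > β ∧ x i = true))) :
    {y | y ∈ X ∧ y ≠ x ∧ lamPos x y = β ∧
        ∀ z ∈ X, z ≠ x → lamPos x z = β → hamming x y ≤ hamming x z}
    = {y | y ∈ X ∧ (∀ i ∈ P0, y i = false) ∧ (∀ i ∈ P1, y i = true) ∧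
        ∀ z ∈ X, (∀ i ∈ P0, z i = false) → (∀ i ∈ P1, z i = true) →
          dotB w y ≤ dotB w z} := by
  have hfeas : ∀ y, (y ≠ x ∧ lamPos x y = β) ↔
      (∀ i ∈ P0, y i = false) ∧ ∀ i ∈ P1, y i = true := by
    intro y
    rw [pinned_iff hP0 hP1, ← lamPos_eq_iff hβn]
    refine and_iff_right_of_imp fun h hyx => ?_
    rw [hyx, lamPos_self] at h
    omega
  ext y
  simp only [Set.mem_ofPred_eq]
  constructor
  · rintro ⟨hyX, hyx, hyβ, hmin⟩
    obtain ⟨hy0, hy1⟩ := (hfeas y).1 ⟨hyx, hyβ⟩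
    refine ⟨hyX, hy0, hy1, fun z hzX hz0 hz1 => (dotB_le_dotB_iff hw y z).2 ?_⟩
    obtain ⟨hzx, hzβ⟩ := (hfeas z).2 ⟨hz0, hz1⟩
    exact hmin z hzX hzx hzβ
  · rintro ⟨hyX, hy0, hy1, hmin⟩
    obtain ⟨hyx, hyβ⟩ := (hfeas y).2 ⟨hy0, hy1⟩
    refine ⟨hyX, hyx, hyβ, fun z hzX hzx hzβ => (dotB_le_dotB_iff hw y z).1 ?_⟩
    obtain ⟨hz0, hz1⟩ := (hfeas z).1 ⟨hzx, hzβ⟩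
    exact hmin z hzX hz0 hz1

theorem closest_vertices_as_LOP {n : ℕ} (X : Finset (Fin n → Bool))
    (x : Fin n → Bool) (hx : x ∈ X)
    (β : ℕ) (hβ1 : 1 ≤ β) (hβn : β ≤ n)
    (w : Fin n → ℤ) (hw : ∀ i, w i = if x i then -1 else 1)
    (P0 P1 : Set (Fin n))
    (hP0 : ∀ i : Fin n, i ∈ P0 ↔
      (((i : ℕ) + 1 = β ∧ x i = true) ∨ ((i : ℕ) + 1 > β ∧ x i = false)))
    (hP1 : ∀ i : Fin n, i ∈ P1 ↔
      (((i : ℕ) + 1 = β ∧ x i = false) ∨ ((i : ℕ) + 1 > β ∧ x i = true)))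
    (hN : ∃ y ∈ X, y ≠ x ∧ lamPos x y = β) :
    {y | y ∈ X ∧ y ≠ x ∧ lamPos x y = β ∧
        ∀ z ∈ X, z ≠ x → lamPos x z = β → hamming x y ≤ hamming x z}
    = {y | y ∈ X ∧ (∀ i ∈ P0, y i = false) ∧ (∀ i ∈ P1, y i = true) ∧
        ∀ z ∈ X, (∀ i ∈ P0, z i = false) → (∀ i ∈ P1, z i = true) →
          dotB w y ≤ dotB w z} :=
  closest_vertices_as_LOP_general X x β hβ1 hβn w hw P0 P1 hP0 hP1
end
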